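/- arXiv:1106.1126 — 2 statements merged into one kernel-verified Lean document; each statement's English description precedes it below -/
import Mathlib

section
/- Let g(x,y) = u(x,y)·x^N·∏_{i=1}^d (y - α_i(x)) where u(0,0) ≠ 0, N ∈ ℚ_{≥0}, α_i(x) = c_i x^τ + (higher order terms) for 1 ≤ i ≤ k, and ord_x(α_i) < τ for k+1 ≤ i ≤ d. Then in_τ(g) = c·x^M·∏_{i=1}^k (y - c_i x^τ) for some nonzero c ∈ ℂ and some M ∈ ℚ. -/
/-!
Grade the monomial `x^i y^j` by its weight `i + τ j`. `in_τ` keeps the part of lowest weight,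
and a polynomial `h` concentrated in weight `r` with `g - h` of weight `> r` is `in_τ g`. Since
the lowest-weight parts of two nonzero polynomials multiply to a nonzero polynomial (the
coefficients form a domain), `in_τ` is multiplicative. Hence `in_τ g` is the product of the
initial parts of the factors: `u` contributes its constant term, `x^N` itself, a root of order
`≥ τ` the factor `y - c_i x^τ`, and a root of order `< τ` its leading monomial.
-/

noncomputable section

open Polynomial

/-- Polynomials in `y` with fractional power series (Hahn series with rational exponents)
coefficients in `x`. -/
abbrev FracPoly := Polynomial (HahnSeries ℚ ℂ)

/-- The set of weights `i + τ·j` (as real numbers) of the monomials `x^i y^j` appearing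
in `g`. -/
def wSupp (τ : ℚ) (g : FracPoly) : Set ℝ :=
  {r | ∃ j : ℕ, ∃ i ∈ (g.coeff j).support, r = (i : ℝ) + (τ : ℝ) * j}

/-- The weighted order `ord_τ(g) = min { i + τ·j : a_{ij} ≠ 0 }` (with weights `w(x)=1`,
`w(y)=τ`), computed as an infimum of real numbers. -/
def ordT (τ : ℚ) (g : FracPoly) : ℝ := sInf (wSupp τ g)

/-- Truncation of a Hahn series retaining only the exponents `i` with `i + τ·j = r`. -/
def truncAt (τ : ℚ) (r : ℝ) (j : ℕ) (a : HahnSeries ℚ ℂ) : HahnSeries ℚ ℂ where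
  coeff i := if ((i : ℝ) + (τ : ℝ) * j = r) then a.coeff i else 0
  isPWO_support' := a.isPWO_support.mono (by
    intro i hi
    simp only [Function.mem_support] at hi
    by_cases h : ((i : ℝ) + (τ : ℝ) * j = r) <;> simp [h] at hi
    exact hi)

/-- The weighted initial part `in_τ(g) = Σ_{i+τj = ord_τ(g)} a_{ij} x^i y^j`. -/
def inT (τ : ℚ) (g : FracPoly) : FracPoly :=
  g.sum fun j a => Polynomial.C (truncAt τ (ordT τ g) j a) * Polynomial.X ^ j

/-- Multiplication of the coefficients of a Hahn series by their exponent: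
`Σ aᵢ xⁱ ↦ Σ i·aᵢ xⁱ`. -/
def expMul (a : HahnSeries ℚ ℂ) : HahnSeries ℚ ℂ where
  coeff i := (i : ℂ) * a.coeff i
  isPWO_support' := a.isPWO_support.mono (by
    intro i hi
    simp only [Function.mem_support] at hi ⊢
    intro h
    simp [h] at hi)

/-- The partial derivative `∂/∂x` on Hahn series: `Σ aᵢ xⁱ ↦ Σ i·aᵢ x^{i-1}`. -/
def derivX (a : HahnSeries ℚ ℂ) : HahnSeries ℚ ℂ :=
  HahnSeries.embDomain (OrderIso.addRight (-1 : ℚ)).toOrderEmbedding (expMul a)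

/-- The partial derivative `∂/∂x` applied coefficientwise to a polynomial in `y` with
fractional power series coefficients. -/
def pderivX (h : FracPoly) : FracPoly :=
  h.sum fun n a => Polynomial.C (derivX a) * Polynomial.X ^ n

/-- The Jacobian determinant `jac(f,g) = f_x g_y − f_y g_x`. -/
def jacF (f g : FracPoly) : FracPoly :=
  pderivX f * Polynomial.derivative g - Polynomial.derivative f * pderivX g

open Set Pointwise

section WeightSupport

variable {τ : ℚ} {g p q : FracPoly}

theorem mem_wSupp {j : ℕ} {i : ℚ} (hi : (g.coeff j).coeff i ≠ 0) :
    (i : ℝ) + τ * j ∈ wSupp τ g :=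
  ⟨j, i, hi, rfl⟩

theorem coeff_coeff_eq_zero_of_notMem_wSupp {j : ℕ} {i : ℚ}
    (hi : (i : ℝ) + τ * j ∉ wSupp τ g) : (g.coeff j).coeff i = 0 :=
  not_not.1 (mt mem_wSupp hi)

@[simp]
theorem wSupp_zero : wSupp τ 0 = ∅ := by
  simp [wSupp]

theorem wSupp_C (a : HahnSeries ℚ ℂ) :
    wSupp τ (C a) = (fun i : ℚ => (i : ℝ)) '' a.support := by
  ext r
  simp only [wSupp, coeff_C, mem_ofPred_eq, mem_image]
  constructor
  · rintro ⟨j, i, hi, rfl⟩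
    obtain rfl : j = 0 := by by_contra hj; simp [hj] at hi
    exact ⟨i, by simpa using hi, by simp⟩
  · rintro ⟨i, hi, rfl⟩
    exact ⟨0, i, by simpa using hi, by simp⟩

theorem wSupp_X : wSupp τ (X : FracPoly) = {(τ : ℝ)} := by
  ext r
  simp only [wSupp, coeff_X, mem_ofPred_eq, mem_singleton_iff]
  constructor
  · rintro ⟨j, i, hi, rfl⟩
    obtain rfl : j = 1 := by by_contra hj; simp [Ne.symm hj] at hi
    obtain rfl : i = 0 := by simpa [HahnSeries.coeff_one] using hi
    simp
  · rintro rfl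
    exact ⟨1, 0, by simp, by simp⟩

theorem wSupp_C_single_subset (q : ℚ) (v : ℂ) :
    wSupp τ (C (HahnSeries.single q v)) ⊆ {(q : ℝ)} := by
  rw [wSupp_C]
  rintro _ ⟨i, hi, rfl⟩
  rw [HahnSeries.support_single_subset hi]
  rfl

@[simp]
theorem wSupp_neg : wSupp τ (-g) = wSupp τ g := by
  simp [wSupp]

theorem wSupp_add_subset : wSupp τ (p + q) ⊆ wSupp τ p ∪ wSupp τ q := by
  rintro _ ⟨j, i, hi, rfl⟩
  by_contra hpq
  simp only [mem_union, not_or] at hpq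
  simp only [HahnSeries.mem_support, coeff_add, HahnSeries.coeff_add,
    coeff_coeff_eq_zero_of_notMem_wSupp hpq.1, coeff_coeff_eq_zero_of_notMem_wSupp hpq.2,
    add_zero, ne_eq, not_true_eq_false] at hi

theorem wSupp_sub_subset : wSupp τ (p - q) ⊆ wSupp τ p ∪ wSupp τ q := by
  have := wSupp_add_subset (τ := τ) (p := p) (q := -q)
  rwa [wSupp_neg, ← sub_eq_add_neg (a := p)] at this

theorem exists_coeff_ne_zero_of_coeff_mul_ne_zero {j : ℕ} {i : ℚ}
    (h : ((p * q).coeff j).coeff i ≠ 0) :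
    ∃ j₁ j₂ : ℕ, ∃ i₁ i₂ : ℚ, j₁ + j₂ = j ∧ i₁ + i₂ = i ∧
      (p.coeff j₁).coeff i₁ ≠ 0 ∧ (q.coeff j₂).coeff i₂ ≠ 0 := by
  rw [coeff_mul, HahnSeries.coeff_sum] at h
  obtain ⟨⟨j₁, j₂⟩, hj, hne⟩ := Finset.exists_ne_zero_of_sum_ne_zero h
  rw [HahnSeries.coeff_mul] at hne
  obtain ⟨⟨i₁, i₂⟩, hi, hne⟩ := Finset.exists_ne_zero_of_sum_ne_zero hne
  exact ⟨j₁, j₂, i₁, i₂, Finset.HasAntidiagonal.mem_antidiagonal.1 hj,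
    (Finset.mem_antidiagonal.1 hi).2.2, left_ne_zero_of_mul hne, right_ne_zero_of_mul hne⟩

theorem wSupp_mul_subset : wSupp τ (p * q) ⊆ wSupp τ p + wSupp τ q := by
  rintro _ ⟨j, i, hi, rfl⟩
  obtain ⟨j₁, j₂, i₁, i₂, rfl, rfl, h₁, h₂⟩ :=
    exists_coeff_ne_zero_of_coeff_mul_ne_zero hi
  exact ⟨_, mem_wSupp h₁, _, mem_wSupp h₂, by push_cast; ring⟩

theorem isLeast_ordT (hg : g ≠ 0) : IsLeast (wSupp τ g) (ordT τ g) := by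
  have hwf : (wSupp τ g).IsWF := by
    have : wSupp τ g =
        ⋃ j ∈ g.support, (fun i : ℚ => (i : ℝ) + τ * j) '' (g.coeff j).support := by
      ext r
      simp only [wSupp, mem_iUnion, mem_image, mem_support_iff]
      constructor
      · rintro ⟨j, i, hi, rfl⟩
        exact ⟨j, fun h => by simp [h] at hi, i, hi, rfl⟩
      · rintro ⟨j, -, i, hi, rfl⟩
        exact ⟨j, i, hi, rfl⟩
    rw [this]
    refine (Finset.isPWO_bUnion _).2 (fun j _ => ?_) |>.isWF
    exact (g.coeff j).isPWO_support.image_of_monotone fun a b hab => by simpa using hab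
  obtain ⟨j, hj⟩ : ∃ j, g.coeff j ≠ 0 := by
    by_contra! h
    exact hg (Polynomial.ext h)
  have hne : (wSupp τ g).Nonempty := ⟨_, mem_wSupp (HahnSeries.coeff_order_eq_zero.not.2 hj)⟩
  have hmin : IsLeast (wSupp τ g) (hwf.min hne) := ⟨hwf.min_mem hne, fun _ => hwf.min_le hne⟩
  rwa [ordT, hmin.csInf_eq]

theorem wSupp_subset_Ici_ordT : wSupp τ g ⊆ Ici (ordT τ g) := by
  rcases eq_or_ne g 0 with rfl | hg
  · simp
  · exact (isLeast_ordT hg).2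

end WeightSupport

section InitialPart

variable {τ : ℚ} {g h : FracPoly}

theorem coeff_inT (j : ℕ) : (inT τ g).coeff j = truncAt τ (ordT τ g) j (g.coeff j) := by
  simp only [inT, Polynomial.sum, finsetSum_coeff, coeff_C_mul_X_pow]
  rw [Finset.sum_ite_eq]
  split_ifs with hj
  · rfl
  · rw [notMem_support_iff.1 hj]
    ext i
    simp [truncAt]

theorem coeff_coeff_inT (j : ℕ) (i : ℚ) :
    ((inT τ g).coeff j).coeff i
      = if (i : ℝ) + τ * j = ordT τ g then (g.coeff j).coeff i else 0 := by
  rw [coeff_inT]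
  rfl

@[simp]
theorem inT_zero : inT τ 0 = 0 := by
  simp [inT]

theorem wSupp_inT_subset : wSupp τ (inT τ g) ⊆ {ordT τ g} := by
  rintro _ ⟨j, i, hi, rfl⟩
  rw [mem_singleton_iff]
  by_contra hne
  exact hi (by rw [coeff_coeff_inT, if_neg hne])

theorem wSupp_sub_inT_subset : wSupp τ (g - inT τ g) ⊆ Ioi (ordT τ g) := by
  rintro _ ⟨j, i, hi, rfl⟩
  rw [HahnSeries.mem_support, coeff_sub, HahnSeries.coeff_sub, coeff_coeff_inT] at hi
  split_ifs at hi with hw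
  · exact absurd (sub_self _) hi
  · rw [sub_zero] at hi
    exact lt_of_le_of_ne (wSupp_subset_Ici_ordT (mem_wSupp hi)) (Ne.symm hw)

theorem inT_ne_zero (hg : g ≠ 0) : inT τ g ≠ 0 := by
  obtain ⟨j, i, hi, hw⟩ := (isLeast_ordT (τ := τ) hg).1
  intro h0
  apply hi
  simpa [coeff_coeff_inT, ← hw] using congr_arg (fun p : FracPoly => (p.coeff j).coeff i) h0

theorem ordT_eq_of_wSupp_subset {r : ℝ} (hh0 : h ≠ 0) (hh : wSupp τ h ⊆ {r})
    (hgh : wSupp τ (g - h) ⊆ Ioi r) : ordT τ g = r := by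
  have hr : r ∈ wSupp τ g := by
    obtain ⟨j, i, hi, hw⟩ := (isLeast_ordT (τ := τ) hh0).1
    obtain rfl : ordT τ h = r := hh ⟨j, i, hi, hw⟩
    have hdiff : ((g - h).coeff j).coeff i = 0 :=
      coeff_coeff_eq_zero_of_notMem_wSupp fun hmem => (hgh hmem).ne hw
    rw [coeff_sub, HahnSeries.coeff_sub, sub_eq_zero] at hdiff
    exact ⟨j, i, by rwa [HahnSeries.mem_support, hdiff], hw⟩
  have hlb : wSupp τ g ⊆ Ici r := by
    have := wSupp_add_subset (τ := τ) (p := h) (q := g - h)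
    rw [add_sub_cancel (a := h)] at this
    refine this.trans ?_
    rw [← Ioi_insert, ← singleton_union]
    exact union_subset_union hh hgh
  rw [ordT, (IsLeast.csInf_eq ⟨hr, hlb⟩ : sInf (wSupp τ g) = r)]

theorem inT_eq_of_wSupp_subset {r : ℝ} (hh0 : h ≠ 0) (hh : wSupp τ h ⊆ {r})
    (hgh : wSupp τ (g - h) ⊆ Ioi r) : inT τ g = h := by
  ext j i
  rw [coeff_coeff_inT, ordT_eq_of_wSupp_subset hh0 hh hgh]
  split_ifs with hw
  · have hdiff : ((g - h).coeff j).coeff i = 0 :=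
      coeff_coeff_eq_zero_of_notMem_wSupp fun hmem => (hgh hmem).ne' hw
    rwa [coeff_sub, HahnSeries.coeff_sub, sub_eq_zero] at hdiff
  · exact (coeff_coeff_eq_zero_of_notMem_wSupp fun hmem => hw (hh hmem)).symm

theorem inT_eq_self {r : ℝ} (hh : wSupp τ h ⊆ {r}) : inT τ h = h := by
  rcases eq_or_ne h 0 with rfl | hh0
  · exact inT_zero
  · exact inT_eq_of_wSupp_subset hh0 hh (by rw [sub_self (a := h)]; simp)

theorem inT_mul (p q : FracPoly) : inT τ (p * q) = inT τ p * inT τ q := by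
  rcases eq_or_ne p 0 with rfl | hp
  · simp
  rcases eq_or_ne q 0 with rfl | hq
  · simp
  refine inT_eq_of_wSupp_subset (r := ordT τ p + ordT τ q)
    (mul_ne_zero (inT_ne_zero hp) (inT_ne_zero hq)) ?_ ?_
  · refine wSupp_mul_subset.trans ?_
    rw [← singleton_add_singleton]
    exact add_subset_add wSupp_inT_subset wSupp_inT_subset
  · rw [show p * q - inT τ p * inT τ q = (p - inT τ p) * q + inT τ p * (q - inT τ q) by ring]
    refine wSupp_add_subset.trans (union_subset ?_ ?_)
    · exact wSupp_mul_subset.trans <| (add_subset_add wSupp_sub_inT_subset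
        wSupp_subset_Ici_ordT).trans (Ioi_add_Ici_subset _ _)
    · exact wSupp_mul_subset.trans <| (add_subset_add
        (wSupp_inT_subset.trans (singleton_subset_iff.2 self_mem_Ici))
        wSupp_sub_inT_subset).trans (Ici_add_Ioi_subset _ _)

variable (τ) in
def inTHom : FracPoly →*₀ FracPoly where
  toFun := inT τ
  map_zero' := inT_zero
  map_one' := inT_eq_self (r := 0) (by simpa using wSupp_C_single_subset (τ := τ) 0 1)
  map_mul' := inT_mul

theorem inT_prod {ι : Type*} (s : Finset ι) (f : ι → FracPoly) :
    inT τ (∏ i ∈ s, f i) = ∏ i ∈ s, inT τ (f i) :=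
  map_prod (inTHom τ) f s

end InitialPart

theorem HahnSeries.support_sub_single_subset_Ioi {Γ R : Type*} [LinearOrder Γ] [AddGroup R]
    {a : HahnSeries Γ R} {q : Γ} (ha : ∀ p < q, a.coeff p = 0) :
    (a - HahnSeries.single q (a.coeff q)).support ⊆ Ioi q := by
  intro p hp
  rw [HahnSeries.mem_support, HahnSeries.coeff_sub, HahnSeries.coeff_single] at hp
  rcases lt_trichotomy p q with hlt | rfl | hgt
  · simp [hlt.ne, ha p hlt] at hp
  · simp at hp
  · exact hgt

theorem HahnSeries.prod_single {Γ R ι : Type*} [AddCommMonoid Γ] [PartialOrder Γ]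
    [IsOrderedCancelAddMonoid Γ] [CommSemiring R] (s : Finset ι) (q : ι → Γ) (v : ι → R) :
    ∏ i ∈ s, HahnSeries.single (q i) (v i) =
      HahnSeries.single (∑ i ∈ s, q i) (∏ i ∈ s, v i) := by
  classical
  induction s using Finset.induction_on with
  | empty => rfl
  | insert i s hi ih =>
    rw [Finset.prod_insert hi, ih, HahnSeries.single_mul_single, Finset.sum_insert hi,
      Finset.prod_insert hi]

section Factors

variable {τ : ℚ}

theorem inT_C_single (q : ℚ) (v : ℂ) :
    inT τ (C (HahnSeries.single q v)) = C (HahnSeries.single q v) :=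
  inT_eq_self (wSupp_C_single_subset q v)

theorem inT_eq_C_coeff_zero_coeff_zero (hτ : 0 < τ) {u : FracPoly}
    (hu0 : (u.coeff 0).coeff 0 ≠ 0)
    (husupp : ∀ j : ℕ, ∀ i ∈ (u.coeff j).support, 0 ≤ i) :
    inT τ u = C (HahnSeries.single 0 ((u.coeff 0).coeff 0)) := by
  refine inT_eq_of_wSupp_subset (C_ne_zero.2 (HahnSeries.single_ne_zero hu0))
    (by simpa using wSupp_C_single_subset (τ := τ) 0 _) ?_
  rintro _ ⟨j, i, hi, rfl⟩
  rw [HahnSeries.mem_support, coeff_sub, HahnSeries.coeff_sub, coeff_C] at hi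
  rcases eq_or_ne j 0 with rfl | hj
  · rw [if_pos rfl, HahnSeries.coeff_single] at hi
    have hi0 : i ≠ 0 := by rintro rfl; simp at hi
    rw [if_neg hi0, sub_zero] at hi
    simpa using lt_of_le_of_ne (husupp 0 i hi) hi0.symm
  · rw [if_neg hj, HahnSeries.coeff_zero, sub_zero] at hi
    have hi0 : (0 : ℝ) ≤ i := by exact_mod_cast husupp j i hi
    have hτj : (0 : ℝ) < τ * j := by positivity
    exact mem_Ioi.2 (by linarith)

theorem inT_X_sub_C_of_coeff_eq_zero {α : HahnSeries ℚ ℂ} (hα : ∀ q < τ, α.coeff q = 0) :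
    inT τ (X - C α) = X - C (HahnSeries.single τ (α.coeff τ)) := by
  refine inT_eq_of_wSupp_subset (r := τ) (X_sub_C_ne_zero _) ?_ ?_
  · refine wSupp_sub_subset.trans (union_subset ?_ (wSupp_C_single_subset _ _))
    rw [wSupp_X]
  · rw [show (X - C α - (X - C (HahnSeries.single τ (α.coeff τ))) : FracPoly)
        = -C (α - HahnSeries.single τ (α.coeff τ)) by rw [C_sub]; ring, wSupp_neg, wSupp_C]
    rintro _ ⟨p, hp, rfl⟩
    exact mem_Ioi.2 (Rat.cast_lt.2 (HahnSeries.support_sub_single_subset_Ioi hα hp))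

theorem inT_X_sub_C_of_order_lt {α : HahnSeries ℚ ℂ} (hα : α ≠ 0) (hord : α.order < τ) :
    inT τ (X - C α) = C (HahnSeries.single α.order (-α.leadingCoeff)) := by
  have hlc : -α.leadingCoeff ≠ 0 := neg_ne_zero.2 (HahnSeries.leadingCoeff_ne_zero.2 hα)
  refine inT_eq_of_wSupp_subset (r := α.order) (C_ne_zero.2 (HahnSeries.single_ne_zero hlc))
    (wSupp_C_single_subset _ _) ?_
  rw [show (X - C α - C (HahnSeries.single α.order (-α.leadingCoeff)) : FracPoly)
      = X - C (α - HahnSeries.single α.order (α.coeff α.order)) by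
    rw [HahnSeries.leadingCoeff_eq, C_sub, HahnSeries.single_neg, C_neg]; ring]
  refine wSupp_sub_subset.trans (union_subset ?_ ?_)
  · rw [wSupp_X, singleton_subset_iff]
    exact (Rat.cast_lt (K := ℝ)).2 hord
  · rw [wSupp_C]
    rintro _ ⟨p, hp, rfl⟩
    exact mem_Ioi.2 (Rat.cast_lt.2 (HahnSeries.support_sub_single_subset_Ioi
      (fun _ => HahnSeries.coeff_eq_zero_of_lt_order) hp))

end Factors

theorem inT_of_factorization_general (τ : ℚ) (hτ : 0 < τ) (d k : ℕ) (hk : k ≤ d)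
    (u : FracPoly) (N : ℚ)
    (α : ℕ → HahnSeries ℚ ℂ) (c : ℕ → ℂ)
    (hu0 : (u.coeff 0).coeff 0 ≠ 0)
    (husupp : ∀ j : ℕ, ∀ i ∈ (u.coeff j).support, 0 ≤ i)
    (hhigh : ∀ i, 1 ≤ i → i ≤ k →
      ((α i).coeff τ = c i ∧ ∀ q : ℚ, q < τ → (α i).coeff q = 0))
    (hlow : ∀ i, k + 1 ≤ i → i ≤ d →
      (α i ≠ 0 ∧ 0 < (α i).order ∧ (α i).order < τ)) :
    ∃ c₀ : ℂ, c₀ ≠ 0 ∧ ∃ M : ℚ,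
      inT τ (u * Polynomial.C (HahnSeries.single N (1 : ℂ)) *
          ∏ i ∈ Finset.Icc 1 d, (Polynomial.X - Polynomial.C (α i)))
        = Polynomial.C (HahnSeries.single M c₀) *
          ∏ i ∈ Finset.Icc 1 k,
            (Polynomial.X - Polynomial.C (HahnSeries.single τ (c i))) := by
  have hhigh' : ∀ i ∈ Finset.Icc 1 k,
      inT τ (X - C (α i)) = X - C (HahnSeries.single τ (c i)) := by
    intro i hi
    obtain ⟨hc, hα⟩ := hhigh i (Finset.mem_Icc.1 hi).1 (Finset.mem_Icc.1 hi).2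
    rw [inT_X_sub_C_of_coeff_eq_zero hα, hc]
  have hlow' : ∀ i ∈ Finset.Ioc k d,
      inT τ (X - C (α i)) = C (HahnSeries.single (α i).order (-(α i).leadingCoeff)) := by
    intro i hi
    obtain ⟨hα, -, hord⟩ := hlow i (Finset.mem_Ioc.1 hi).1 (Finset.mem_Ioc.1 hi).2
    exact inT_X_sub_C_of_order_lt hα hord
  have hIcc : ∀ n, Finset.Icc 1 n = Finset.Ioc 0 n := Finset.Icc_add_one_left_eq_Ioc 0
  refine ⟨(u.coeff 0).coeff 0 * 1 * ∏ i ∈ Finset.Ioc k d, -(α i).leadingCoeff,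
    mul_ne_zero (by simpa using hu0) (Finset.prod_ne_zero_iff.2 fun i hi => ?_),
    0 + N + ∑ i ∈ Finset.Ioc k d, (α i).order, ?_⟩
  · obtain ⟨hα, -⟩ := hlow i (Finset.mem_Ioc.1 hi).1 (Finset.mem_Ioc.1 hi).2
    exact neg_ne_zero.2 (HahnSeries.leadingCoeff_ne_zero.2 hα)
  rw [inT_mul, inT_mul, inT_eq_C_coeff_zero_coeff_zero hτ hu0 husupp, inT_C_single, inT_prod,
    hIcc d, ← Finset.prod_Ioc_consecutive _ (Nat.zero_le k) hk, ← hIcc k,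
    Finset.prod_congr rfl hhigh', Finset.prod_congr rfl hlow', ← map_prod,
    HahnSeries.prod_single]
  simp only [← HahnSeries.single_mul_single, map_mul]
  ring

/-- Let `g(x,y) = u(x,y)·x^N·∏_{i=1}^d (y - α_i(x))` where `u(0,0) ≠ 0`, `N ∈ ℚ_{≥0}`,
`α_i(x) = c_i x^τ + (higher order)` for `1 ≤ i ≤ k`, and `0 < ord_x(α_i) < τ` for
`k+1 ≤ i ≤ d`.  Then `in_τ(g) = c·x^M·∏_{i=1}^k (y - c_i x^τ)` for some `c ∈ ℂ \ {0}`
and some `M ∈ ℚ`. -/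
theorem inT_of_factorization (τ : ℚ) (hτ : 0 < τ) (d k : ℕ) (hk : k ≤ d)
    (u : FracPoly) (N : ℚ) (hN : 0 ≤ N)
    (α : ℕ → HahnSeries ℚ ℂ) (c : ℕ → ℂ)
    (hu0 : (u.coeff 0).coeff 0 ≠ 0)
    (husupp : ∀ j : ℕ, ∀ i ∈ (u.coeff j).support, 0 ≤ i)
    (hhigh : ∀ i, 1 ≤ i → i ≤ k →
      ((α i).coeff τ = c i ∧ ∀ q : ℚ, q < τ → (α i).coeff q = 0))
    (hlow : ∀ i, k + 1 ≤ i → i ≤ d →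
      (α i ≠ 0 ∧ 0 < (α i).order ∧ (α i).order < τ)) :
    ∃ c₀ : ℂ, c₀ ≠ 0 ∧ ∃ M : ℚ,
      inT τ (u * Polynomial.C (HahnSeries.single N (1 : ℂ)) *
          ∏ i ∈ Finset.Icc 1 d, (Polynomial.X - Polynomial.C (α i)))
        = Polynomial.C (HahnSeries.single M c₀) *
          ∏ i ∈ Finset.Icc 1 k,
            (Polynomial.X - Polynomial.C (HahnSeries.single τ (c i))) :=
  inT_of_factorization_general τ hτ d k hk u N α c hu0 husupp hhigh hlow
end
end

section
/- Let f be an irreducible Weierstrass polynomial of degree n with Puiseux characteristic (b₀,...,b_g), let f^{(k)} be a characteristic approximate root (degree b₀/l_k, contact cont(f, f^{(k)}) = b_{k+1}/b₀), and let γ be a Newton–Puiseux root of f. Then there is exactly one Newton–Puiseux root δ of f^{(k)} with O(δ, γ) ≥ b_{k+1}/b₀. -/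
noncomputable section

open Polynomial

/-- The contact `cont(A,B) = max { ord_x(α - β) : α ∈ A, β ∈ B }` between two nonempty
finite sets of fractional power series, valued in `WithTop ℚ`. -/
def contactSets (A B : Finset (HahnSeries ℚ ℂ)) (hA : A.Nonempty) (hB : B.Nonempty) :
    WithTop ℚ :=
  (A ×ˢ B).sup' (hA.product hB) fun p => (p.1 - p.2).orderTop

/-!
The automorphism `σ` of `ℂ((x^ℚ))` multiplying the coefficient of `x^r` by `exp (2πir)` fixes
`ℂ[[x]]`, so it permutes the roots of `f`. The `σ`-orbit of one root gives a monic factor of `f`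
whose coefficients are `σ`-fixed and of nonnegative order, hence lie in `ℂ[[x]]`; by irreducibility
this factor is `f` itself, so `σ` acts transitively on the roots of `f`. Moving a pair `(γ₀, δ₀)`
that realizes `cont(f, f^{(k)})` by a power of `σ` gives, for every root `γ` of `f`, a root `δ` of
`f^{(k)}` with `O(δ, γ) = b_{k+1}/b₀`. Uniqueness is the strong triangle inequality: two such roots
would have contact at least `b_{k+1}/b₀` with each other, more than any `b_i/b₀` with `i ≤ k`.
-/

theorem Polynomial.map_prod_X_sub_C_eq_self {K : Type*} [CommRing K] {σ : K →+* K}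
    (hσ : Function.Injective σ) {s : Finset K} (hs : Set.MapsTo σ s s) :
    (∏ δ ∈ s, (X - C δ)).map σ = ∏ δ ∈ s, (X - C δ) := by
  simp only [Polynomial.map_prod, Polynomial.map_sub, map_X, map_C]
  exact Finset.prod_nbij σ hs hσ.injOn (Finset.surjOn_of_injOn_of_card_le σ hs hσ.injOn le_rfl)
    fun _ _ => rfl

theorem Polynomial.map_eq_prod_X_sub_C_of_mem_lifts {R K : Type*} [CommRing R] [CommRing K]
    [IsDomain K] {φ : R →+* K} (hφ : Function.Injective φ) {f : R[X]} (hf : f.Monic)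
    (hirr : Irreducible f) {s : Finset K} (hs : s.Nonempty) (hroots : ∀ δ ∈ s, (f.map φ).IsRoot δ)
    (hlifts : ∏ δ ∈ s, (X - C δ) ∈ lifts φ) : f.map φ = ∏ δ ∈ s, (X - C δ) := by
  obtain ⟨G, hGmap, -, hGmonic⟩ := lifts_and_natDegree_eq_and_monic hlifts
    (monic_prod_of_monic _ _ fun δ _ => monic_X_sub_C δ)
  have hfφ : f.map φ ≠ 0 := (hf.map φ).ne_zero
  have hdvd : G ∣ f := by
    rw [← map_dvd_map φ hφ hGmonic, hGmap, Finset.prod_eq_multiset_prod,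
      Multiset.prod_X_sub_C_dvd_iff_le_roots hfφ, Multiset.le_iff_subset s.nodup]
    exact fun δ hδ => (mem_roots hfφ).mpr (hroots δ hδ)
  rcases hirr.dvd_iff.mp hdvd with hunit | hassoc
  · rw [hGmonic.isUnit_iff] at hunit
    have hsroots := roots_prod_X_sub_C s
    rw [← hGmap, hunit, Polynomial.map_one, roots_one] at hsroots
    exact absurd (Finset.val_eq_zero.mp hsroots.symm) hs.ne_empty
  · rw [eq_of_monic_of_associated hf hGmonic hassoc, hGmap]

def Rat.fourierChar : AddChar ℚ ℂ where
  toFun r := Complex.exp (2 * Real.pi * Complex.I * r)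
  map_zero_eq_one' := by simp
  map_add_eq_mul' r s := by push_cast; rw [mul_add, Complex.exp_add]

theorem Rat.fourierChar_one : Rat.fourierChar 1 = 1 := by
  simp [Rat.fourierChar]

theorem Rat.exists_intCast_eq_of_fourierChar_eq_one {r : ℚ} (h : Rat.fourierChar r = 1) :
    ∃ z : ℤ, (z : ℚ) = r := by
  obtain ⟨z, hz⟩ := Complex.exp_eq_one_iff.mp h
  have h2πi : 2 * Real.pi * Complex.I ≠ 0 := by simp [Real.pi_ne_zero]
  refine ⟨z, ?_⟩
  exact_mod_cast (mul_left_cancel₀ h2πi (hz.trans (mul_comm _ _))).symm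

namespace HahnSeries

theorem le_orderTop_sub_of_le {Γ R : Type*} [Zero Γ] [LinearOrder Γ] [AddCommGroup R]
    {x y z : HahnSeries Γ R} {q : WithTop Γ}
    (hx : q ≤ (x - z).orderTop) (hy : q ≤ (y - z).orderTop) : q ≤ (x - y).orderTop := by
  rw [← sub_sub_sub_cancel_right x y z]
  exact (le_min hx hy).trans min_orderTop_le_orderTop_sub

section Twist

variable {Γ R : Type*} [AddCommGroup Γ] [LinearOrder Γ] [IsOrderedAddMonoid Γ] [CommRing R]

def twist (χ : AddChar Γ R) : HahnSeries Γ R →+* HahnSeries Γ R where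
  toFun x := ⟨fun a => χ a * x.coeff a, x.isPWO_support.mono fun _ => right_ne_zero_of_mul⟩
  map_zero' := by ext; simp
  map_one' := by ext a; by_cases ha : a = 0 <;> simp [coeff_one, ha]
  map_add' x y := by ext; simp [mul_add]
  map_mul' x y := by
    ext a
    simp only [coeff_mul, Finset.mul_sum]
    refine Finset.sum_congr ?_ fun ij hij => ?_
    · ext; simp [(χ.val_isUnit _).mul_right_eq_zero]
    · rw [← (Finset.mem_antidiagonal.mp hij).2.2, AddChar.map_add_eq_mul]
      ring

variable (χ : AddChar Γ R)

@[simp]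
theorem coeff_twist (x : HahnSeries Γ R) (a : Γ) : (twist χ x).coeff a = χ a * x.coeff a := rfl

theorem support_twist (x : HahnSeries Γ R) : (twist χ x).support = x.support := by
  ext a; simp [(χ.val_isUnit a).mul_right_eq_zero]

theorem twist_injective : Function.Injective (twist χ) := fun x y h => by
  ext a
  simpa [(χ.val_isUnit a).mul_right_inj] using congr(($h).coeff a)

theorem orderTop_twist (x : HahnSeries Γ R) : (twist χ x).orderTop = x.orderTop := by
  rcases eq_or_ne x 0 with rfl | hx
  · simp
  rw [← order_eq_orderTop_of_ne_zero hx]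
  refine orderTop_eq_of_le ?_ fun b hb => ?_
  · rw [support_twist]; exact coeff_order_eq_zero.not.mpr hx
  · exact order_le_of_coeff_ne_zero (by rwa [support_twist] at hb)

theorem twist_one_apply (x : HahnSeries Γ R) : twist 1 x = x := by
  ext a; simp

theorem twist_mul_apply (χ ψ : AddChar Γ R) (x : HahnSeries Γ R) :
    twist (χ * ψ) x = twist χ (twist ψ x) := by
  ext a; simp [mul_assoc]

end Twist

section OfPowerSeries

variable {Γ R : Type*} [Ring Γ] [LinearOrder Γ] [IsStrictOrderedRing Γ]

theorem mem_range_ofPowerSeries [Semiring R] {x : HahnSeries Γ R}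
    (hx : ∀ a ∈ x.support, ∃ n : ℕ, (n : Γ) = a) : x ∈ Set.range (ofPowerSeries Γ R) := by
  refine ⟨PowerSeries.mk fun n => x.coeff n, ?_⟩
  ext a
  by_cases ha : ∃ n : ℕ, (n : Γ) = a
  · obtain ⟨n, rfl⟩ := ha
    simp [ofPowerSeries_apply_coeff]
  · rw [ofPowerSeries_apply, embDomain_of_notMem_range (by simpa using ha)]
    by_contra h
    exact ha (hx a (Ne.symm h))

theorem zero_le_orderTop_ofPowerSeries [Semiring R] (p : PowerSeries R) :
    0 ≤ (ofPowerSeries Γ R p).orderTop := by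
  rw [ofPowerSeries_apply, orderTop_embDomain]
  cases (toPowerSeries.symm p).orderTop with
  | top => simp
  | coe n => simp

theorem twist_ofPowerSeries [CommRing R] {χ : AddChar Γ R} (hχ : χ 1 = 1) (p : PowerSeries R) :
    twist χ (ofPowerSeries Γ R p) = ofPowerSeries Γ R p := by
  ext a
  by_cases ha : ∃ n : ℕ, (n : Γ) = a
  · obtain ⟨n, rfl⟩ := ha
    rw [coeff_twist, ← nsmul_one, AddChar.map_nsmul_eq_pow, hχ, one_pow, one_mul]
  · rw [coeff_twist, ofPowerSeries_apply, embDomain_of_notMem_range (by simpa using ha), mul_zero]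

theorem twist_eval₂_ofPowerSeries [CommRing R] {χ : AddChar Γ R} (hχ : χ 1 = 1)
    (p : (PowerSeries R)[X]) (x : HahnSeries Γ R) :
    twist χ (p.eval₂ (ofPowerSeries Γ R) x) = p.eval₂ (ofPowerSeries Γ R) (twist χ x) := by
  rw [hom_eval₂]
  congr 1
  exact RingHom.ext (twist_ofPowerSeries hχ)

end OfPowerSeries

section Integral

variable {Γ R : Type*} [AddCommGroup Γ] [LinearOrder Γ] [IsOrderedAddMonoid Γ] [CommRing R]
  [IsDomain R]

theorem zero_le_orderTop_of_eval₂_eq_zero {A : Type*} [CommRing A] {φ : A →+* HahnSeries Γ R}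
    (hφ : ∀ a, 0 ≤ (φ a).orderTop) {p : A[X]} (hp : p.Monic) {x : HahnSeries Γ R}
    (hx : p.eval₂ φ x = 0) : 0 ≤ x.orderTop := by
  -- the valuation ring `{x | 0 ≤ x.orderTop}`, integrally closed in `HahnSeries Γ R`
  let O := (addVal Γ R).toValuation.integer
  let ψ : A →+* O := φ.codRestrict O hφ
  have hint : IsIntegral O x := ⟨p.map ψ, hp.map ψ, by rw [eval₂_map]; exact hx⟩
  exact (Valuation.integer.integers _).mem_of_integral hint

theorem zero_le_orderTop_coeff_prod_X_sub_C {s : Finset (HahnSeries Γ R)}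
    (hs : ∀ δ ∈ s, 0 ≤ δ.orderTop) (n : ℕ) :
    0 ≤ ((∏ δ ∈ s, (X - Polynomial.C δ)).coeff n).orderTop := by
  let O := (addVal Γ R).toValuation.integer
  have hlifts : ∏ δ ∈ s, (X - Polynomial.C δ) ∈ lifts O.subtype := by
    refine Subsemiring.prod_mem _ fun δ hδ => ⟨X - Polynomial.C ⟨δ, hs δ hδ⟩, by simp⟩
  obtain ⟨c, hc⟩ := (lifts_iff_coeff_lifts _).mp hlifts n
  rw [← hc]
  exact c.2

end Integral

theorem mem_range_ofPowerSeries_of_twist_eq_self {x : HahnSeries ℚ ℂ}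
    (hfix : twist Rat.fourierChar x = x) (hx : 0 ≤ x.orderTop) :
    x ∈ Set.range (ofPowerSeries ℚ ℂ) := by
  refine mem_range_ofPowerSeries fun a ha => ?_
  have hχ : Rat.fourierChar a = 1 := (mul_eq_right₀ ha).mp congr(($hfix).coeff a)
  obtain ⟨z, rfl⟩ := Rat.exists_intCast_eq_of_fourierChar_eq_one hχ
  have hz : ((0 : ℚ) : WithTop ℚ) ≤ (z : ℚ) := hx.trans (orderTop_le_of_coeff_ne_zero ha)
  lift z to ℕ using by exact_mod_cast hz
  exact ⟨z, by simp⟩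

theorem exists_twist_pow_eq_of_irreducible {f : (PowerSeries ℂ)[X]} (hf : f.Monic)
    (hirr : Irreducible f) {Z : Finset (HahnSeries ℚ ℂ)}
    (hZ : ∀ x, x ∈ Z ↔ f.eval₂ (ofPowerSeries ℚ ℂ) x = 0) {γ₀ γ : HahnSeries ℚ ℂ}
    (hγ₀ : γ₀ ∈ Z) (hγ : γ ∈ Z) : ∃ m : ℕ, twist (Rat.fourierChar ^ m) γ₀ = γ := by
  classical
  set σ := twist Rat.fourierChar
  set O := Z.filter fun x => ∃ m : ℕ, twist (Rat.fourierChar ^ m) γ₀ = x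
  have hσO : Set.MapsTo σ O O := by
    intro x hx
    obtain ⟨hxZ, m, rfl⟩ := Finset.mem_filter.mp hx
    refine Finset.mem_filter.mpr ⟨?_, m + 1, by rw [pow_succ', twist_mul_apply]⟩
    rw [hZ, ← twist_eval₂_ofPowerSeries Rat.fourierChar_one, (hZ _).mp hxZ, map_zero]
  have hσP := map_prod_X_sub_C_eq_self (twist_injective _) hσO
  have hlifts : ∏ δ ∈ O, (X - Polynomial.C δ) ∈ lifts (ofPowerSeries ℚ ℂ) := by
    refine (lifts_iff_coeff_lifts _).mpr fun n => mem_range_ofPowerSeries_of_twist_eq_self ?_ ?_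
    · simpa only [coeff_map] using congr(($hσP).coeff n)
    · refine zero_le_orderTop_coeff_prod_X_sub_C (fun δ hδ => ?_) n
      exact zero_le_orderTop_of_eval₂_eq_zero zero_le_orderTop_ofPowerSeries hf
        ((hZ δ).mp (Finset.mem_filter.mp hδ).1)
  have hfO := map_eq_prod_X_sub_C_of_mem_lifts ofPowerSeries_injective hf hirr
    ⟨γ₀, Finset.mem_filter.mpr ⟨hγ₀, 0, by rw [pow_zero, twist_one_apply]⟩⟩
    (fun δ hδ => by rw [IsRoot, eval_map]; exact (hZ δ).mp (Finset.mem_filter.mp hδ).1) hlifts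
  have hγO : γ ∈ O := by
    have hroot : γ ∈ (f.map (ofPowerSeries ℚ ℂ)).roots := by
      rw [mem_roots (hf.map _).ne_zero, IsRoot, eval_map]
      exact (hZ γ).mp hγ
    rwa [hfO, roots_prod_X_sub_C] at hroot
  exact (Finset.mem_filter.mp hγO).2

end HahnSeries

theorem unique_root_of_approximate_root_with_high_contact_general
    (n g k : ℕ) (hn : 0 < n) (hk : k < g)
    (b : ℕ → ℕ)
    (hb0 : b 0 = n)
    (hbmono : ∀ m, m < g → b m < b (m + 1))
    (f fk : Polynomial (PowerSeries ℂ))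
    (hfmonic : f.Monic)
    (hfirr : Irreducible f)
    (Zf Zk : Finset (HahnSeries ℚ ℂ))
    (hZf : ∀ γ, γ ∈ Zf ↔ Polynomial.eval₂ (HahnSeries.ofPowerSeries ℚ ℂ) γ f = 0)
    (hZk : ∀ δ, δ ∈ Zk ↔ Polynomial.eval₂ (HahnSeries.ofPowerSeries ℚ ℂ) δ fk = 0)
    (hnef : Zf.Nonempty) (hnek : Zk.Nonempty)
    -- `cont(f, f^{(k)}) = b_{k+1}/b₀` :
    (hcont : contactSets Zf Zk hnef hnek = ((b (k + 1) : ℚ) / (b 0 : ℚ) : ℚ))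
    -- pairwise contacts between the roots of `f^{(k)}` are among `b₁/b₀,...,b_k/b₀` :
    (hZkpair : ∀ δ₁ ∈ Zk, ∀ δ₂ ∈ Zk, δ₁ ≠ δ₂ →
      ∃ i, 1 ≤ i ∧ i ≤ k ∧ (δ₁ - δ₂).orderTop = ((b i : ℚ) / (b 0 : ℚ) : ℚ)) :
    ∀ γ ∈ Zf, ∃! δ, δ ∈ Zk ∧
      ((b (k + 1) : ℚ) / (b 0 : ℚ) : WithTop ℚ) ≤ (δ - γ).orderTop := by
  intro γ hγ
  obtain ⟨⟨γ₀, δ₀⟩, hmem, hsup⟩ := Finset.exists_mem_eq_sup' (hnef.product hnek)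
    fun p => (p.1 - p.2).orderTop
  obtain ⟨hγ₀, hδ₀⟩ := Finset.mem_product.mp hmem
  obtain ⟨m, rfl⟩ := HahnSeries.exists_twist_pow_eq_of_irreducible hfmonic hfirr hZf hγ₀ hγ
  have hχm : (Rat.fourierChar ^ m) 1 = 1 := by rw [AddChar.pow_apply, Rat.fourierChar_one, one_pow]
  set τ := HahnSeries.twist (Rat.fourierChar ^ m)
  have hτδ₀ : τ δ₀ ∈ Zk := by
    rw [hZk, ← HahnSeries.twist_eval₂_ofPowerSeries hχm, (hZk δ₀).mp hδ₀, map_zero]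
  have hcontact : (τ δ₀ - τ γ₀).orderTop = ((b (k + 1) : ℚ) / (b 0 : ℚ) : ℚ) := by
    rw [← map_sub, HahnSeries.orderTop_twist, ← HahnSeries.orderTop_neg, neg_sub, ← hcont,
      contactSets, hsup]
  refine ⟨τ δ₀, ⟨hτδ₀, hcontact.ge⟩, fun δ ⟨hδ, hδγ⟩ => by_contra fun hne => ?_⟩
  obtain ⟨i, -, hik, hδi⟩ := hZkpair δ hδ (τ δ₀) hτδ₀ hne
  have hbi : b i < b (k + 1) :=
    strictMonoOn_Iic_of_lt_succ hbmono (Set.mem_Iic.mpr (by omega)) (Set.mem_Iic.mpr hk)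
      (by omega)
  have hlt : (b i : ℚ) / b 0 < (b (k + 1) : ℚ) / b 0 :=
    div_lt_div_of_pos_right (by exact_mod_cast hbi) (by rw [hb0]; exact_mod_cast hn)
  have hle := HahnSeries.le_orderTop_sub_of_le hδγ hcontact.ge
  rw [hδi, WithTop.coe_le_coe] at hle
  exact hle.not_gt hlt

/-- Let `f` be an irreducible Weierstrass polynomial of degree `n = b₀` with Puiseux
characteristic `(b₀,...,b_g)`, and let `f^{(k)}` be a characteristic approximate root of
`f`: an irreducible Weierstrass polynomial of degree `b₀/l_k` with
`cont(f, f^{(k)}) = b_{k+1}/b₀`, all of whose pairwise root contacts lie among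
`b₁/b₀, ..., b_k/b₀`.  Then for any Newton–Puiseux root `γ` of `f` there is exactly one
Newton–Puiseux root `δ` of `f^{(k)}` with `O(δ, γ) ≥ b_{k+1}/b₀`. -/
theorem unique_root_of_approximate_root_with_high_contact
    (n g k : ℕ) (hn : 0 < n) (hg : 1 ≤ g) (hk : k < g)
    (b l : ℕ → ℕ)
    (hb0 : b 0 = n)
    (hbmono : ∀ m, m < g → b m < b (m + 1))
    (hl0 : l 0 = n)
    (hl : ∀ m, m < g → l (m + 1) = Nat.gcd (l m) (b (m + 1)))
    (hlg : l g = 1)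
    (f fk : Polynomial (PowerSeries ℂ))
    (hfmonic : f.Monic) (hfdeg : f.natDegree = n)
    (hfW : ∀ j, j < n → PowerSeries.constantCoeff (f.coeff j) = 0)
    (hfirr : Irreducible f)
    (hfkmonic : fk.Monic) (hfkdeg : fk.natDegree = b 0 / l k)
    (hfkW : ∀ j, j < b 0 / l k → PowerSeries.constantCoeff (fk.coeff j) = 0)
    (hfkirr : Irreducible fk)
    (Zf Zk : Finset (HahnSeries ℚ ℂ))
    (hZf : ∀ γ, γ ∈ Zf ↔ Polynomial.eval₂ (HahnSeries.ofPowerSeries ℚ ℂ) γ f = 0)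
    (hZk : ∀ δ, δ ∈ Zk ↔ Polynomial.eval₂ (HahnSeries.ofPowerSeries ℚ ℂ) δ fk = 0)
    (hnef : Zf.Nonempty) (hnek : Zk.Nonempty)
    -- `cont(f, f^{(k)}) = b_{k+1}/b₀` :
    (hcont : contactSets Zf Zk hnef hnek = ((b (k + 1) : ℚ) / (b 0 : ℚ) : ℚ))
    -- pairwise contacts between the roots of `f^{(k)}` are among `b₁/b₀,...,b_k/b₀` :
    (hZkpair : ∀ δ₁ ∈ Zk, ∀ δ₂ ∈ Zk, δ₁ ≠ δ₂ →
      ∃ i, 1 ≤ i ∧ i ≤ k ∧ (δ₁ - δ₂).orderTop = ((b i : ℚ) / (b 0 : ℚ) : ℚ)) :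
    ∀ γ ∈ Zf, ∃! δ, δ ∈ Zk ∧
      ((b (k + 1) : ℚ) / (b 0 : ℚ) : WithTop ℚ) ≤ (δ - γ).orderTop :=
  unique_root_of_approximate_root_with_high_contact_general n g k hn hk b hb0 hbmono f fk hfmonic
    hfirr Zf Zk hZf hZk hnef hnek hcont hZkpair
end
end
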